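/- Let a < b be integers, α : ℤ → ℝ with 0 < α(t) ≤ 1, B : ℝ → ℝ with B(α(t)) ≠ 0. Define the type II left AB fractional sum (*ᴬᴮₐ∇^{-α(t)} g)(t) = ((1-α(t))/B(α(t))) g(t) + ∑_{s=a+1}^{t} (α(s)/(B(α(s)) Γ(α(s)))) (t-s+1)^{\overline{α(s)-1}} g(s), and the type I right AB fractional sum (ᴬᴮ∇_b^{-α(t)} f)(t) = ((1-α(t))/B(α(t))) f(t) + (α(t)/(B(α(t)) Γ(α(t)))) ∑_{s=t}^{b-1} (s-t+1)^{\overline{α(t)-1}} f(s). Then ∑_{t=a+1}^{b-1} f(t) · (*ᴬᴮₐ∇^{-α(t)} g)(t) = ∑_{t=a+1}^{b-1} g(t) · (ᴬᴮ∇_b^{-α(t)} f)(t). -/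

import Mathlib

/-- Generalized rising factorial `x^{\overline{β}} = Γ(x+β)/Γ(x)`. -/
noncomputable def rise (x β : ℝ) : ℝ := Real.Gamma (x + β) / Real.Gamma x

/-- Type II left AB nabla fractional sum of variable order. -/
noncomputable def ABleftII (a : ℤ) (α : ℤ → ℝ) (B : ℝ → ℝ) (g : ℤ → ℝ) (t : ℤ) : ℝ :=
  (1 - α t) / B (α t) * g t +
    ∑ s ∈ Finset.Icc (a + 1) t,
      α s / (B (α s) * Real.Gamma (α s)) * rise ((t : ℝ) - s + 1) (α s - 1) * g s

/-- Type I right AB nabla fractional sum of variable order. -/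
noncomputable def ABrightI (b : ℤ) (α : ℤ → ℝ) (B : ℝ → ℝ) (f : ℤ → ℝ) (t : ℤ) : ℝ :=
  (1 - α t) / B (α t) * f t +
    α t / (B (α t) * Real.Gamma (α t)) *
      ∑ s ∈ Finset.Icc t (b - 1), rise ((s : ℝ) - t + 1) (α t - 1) * f s

/-!
Both sides split into a local part `(1 - α t) / B (α t) * f t * g t` and a convolution part with
the same kernel `K t s = α s / (B (α s) Γ(α s)) · (t - s + 1)^{\overline{α s - 1}}`, summed over
the triangle `a < s ≤ t < b`. Summing that triangle by rows or by columns is the summation by parts.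
-/

open Finset

theorem Finset.sum_Icc_sum_Icc_comm {ι M : Type*} [LinearOrder ι] [LocallyFiniteOrder ι]
    [AddCommMonoid M] (m n : ι) (F : ι → ι → M) :
    ∑ t ∈ Icc m n, ∑ s ∈ Icc m t, F t s = ∑ s ∈ Icc m n, ∑ t ∈ Icc s n, F t s :=
  sum_comm' fun t s => by
    simp only [mem_Icc]
    exact ⟨fun ⟨⟨_, htn⟩, hms, hst⟩ => ⟨⟨hst, htn⟩, hms, hst.trans htn⟩,
      fun ⟨⟨hst, htn⟩, hms, _⟩ => ⟨⟨hms.trans hst, htn⟩, hms, hst⟩⟩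

theorem sum_mul_sum_Icc_eq_sum_mul_sum_Icc {ι R : Type*} [LinearOrder ι] [LocallyFiniteOrder ι]
    [CommSemiring R] (m n : ι) (K : ι → ι → R) (f g : ι → R) :
    ∑ t ∈ Icc m n, f t * ∑ s ∈ Icc m t, K t s * g s
      = ∑ t ∈ Icc m n, g t * ∑ s ∈ Icc t n, K s t * f s := by
  simp only [mul_sum]
  rw [sum_Icc_sum_Icc_comm]
  exact sum_congr rfl fun _ _ => sum_congr rfl fun _ _ => by ring

theorem AB_sum_by_parts_II_I_general
    (a b : ℤ) (f g : ℤ → ℝ) (α : ℤ → ℝ) (B : ℝ → ℝ) :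
    ∑ t ∈ Finset.Icc (a + 1) (b - 1), f t * ABleftII a α B g t
    = ∑ t ∈ Finset.Icc (a + 1) (b - 1), g t * ABrightI b α B f t := by
  set K : ℤ → ℤ → ℝ := fun t s =>
    α s / (B (α s) * Real.Gamma (α s)) * rise ((t : ℝ) - s + 1) (α s - 1)
  have hleft : ∀ t, ABleftII a α B g t
      = (1 - α t) / B (α t) * g t + ∑ s ∈ Icc (a + 1) t, K t s * g s := fun _ => rfl
  have hright : ∀ t, ABrightI b α B f t
      = (1 - α t) / B (α t) * f t + ∑ s ∈ Icc t (b - 1), K s t * f s := fun t => by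
    simp only [ABrightI, K, mul_sum, mul_assoc]
  simp only [hleft, hright, mul_add, sum_add_distrib,
    sum_mul_sum_Icc_eq_sum_mul_sum_Icc (a + 1) (b - 1) K f g]
  congr 1
  exact sum_congr rfl fun _ _ => by ring

/-- Integration by parts for AB nabla fractional sums (type II left / type I right). -/
theorem AB_sum_by_parts_II_I
    (a b : ℤ) (hab : a < b) (f g : ℤ → ℝ) (α : ℤ → ℝ) (B : ℝ → ℝ)
    (hα : ∀ t, 0 < α t ∧ α t ≤ 1) (hB : ∀ t, B (α t) ≠ 0) :
    ∑ t ∈ Finset.Icc (a + 1) (b - 1), f t * ABleftII a α B g t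
    = ∑ t ∈ Finset.Icc (a + 1) (b - 1), g t * ABrightI b α B f t :=
  AB_sum_by_parts_II_I_general a b f g α B
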